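/- Let T > 0, d ≥ 1, and let K be a set of continuous bounded-variation functions [0,T] → ℝ^d that is compact with respect to the norm ‖b‖ = |b(0)| + |b|_{1-var;[0,T]}. Then [0,T] × K is compact with respect to the metric ρ_{1-var}: every sequence (t_n, x_n) with t_n ∈ [0,T] and x_n ∈ K has a subsequence (t_{n_k}, x_{n_k}) and a limit (t, x) ∈ [0,T] × K with ρ_{1-var}((t_{n_k},x_{n_k}),(t,x)) → 0. -/

import Mathlib

/-!
Extract a subsequence along which `x n → y` in `1`-variation (compactness of `K`) and
`t n → t` (compactness of `[0,T]`). Writing `a_s b - a_t y = a_s (b - y) + (a_s y - a_t y)`,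
stopping does not increase variation, and `a_s y - a_t y` only sees `y` between `s` and `t`,
so `ρ_{1-var}((s,b),(t,y)) ≤ |s - t| + |b - y|_{1-var} + |y|_{1-var;[s ∧ t, s ∨ t]}`.
The last term tends to `0` as `s → t` because the variation of a continuous function of
bounded variation over shrinking intervals around a point tends to `0`.
-/

open Filter

/-- The metric `ρ_{1-var}((t,b),(s,e)) = |t - s| + |a_t b - a_s e|_{1-var;[0,T]}`,
where `a_t` is the stopping operator `(a_t x)(r) = x(min(r,t))`. -/
noncomputable def rho1var {d : ℕ} (T : ℝ) (t : ℝ) (b : ℝ → EuclideanSpace ℝ (Fin d))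
    (s : ℝ) (e : ℝ → EuclideanSpace ℝ (Fin d)) : ℝ :=
  |t - s| + (eVariationOn (fun r => b (min r t) - e (min r s)) (Set.Icc 0 T)).toReal

open Set Topology

namespace eVariationOn

variable {α : Type*} [LinearOrder α] {E : Type*} [SeminormedAddCommGroup E]

theorem sub_le (f g : α → E) (s : Set α) :
    eVariationOn (f - g) s ≤ eVariationOn f s + eVariationOn g s := by
  refine iSup_le fun ⟨n, u, hu, us⟩ => ?_
  calc ∑ i ∈ Finset.range n, edist ((f - g) (u (i + 1))) ((f - g) (u i))
      ≤ ∑ i ∈ Finset.range n,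
          (edist (f (u (i + 1))) (f (u i)) + edist (g (u (i + 1))) (g (u i))) :=
        Finset.sum_le_sum fun i _ => by
          simpa only [Pi.sub_apply, sub_eq_add_neg, edist_neg_neg] using
            edist_add_add_le (f (u (i + 1))) (-g (u (i + 1))) (f (u i)) (-g (u i))
    _ = _ := Finset.sum_add_distrib
    _ ≤ _ := add_le_add (sum_le hu us) (sum_le hu us)

theorem const_sub (c : E) (f : α → E) (s : Set α) :
    eVariationOn (fun r => c - f r) s = eVariationOn f s := by
  simp only [eVariationOn, edist_sub_left]

theorem sub_const (c : E) (f : α → E) (s : Set α) :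
    eVariationOn (fun r => f r - c) s = eVariationOn f s := by
  simp only [eVariationOn, edist_sub_right]

theorem comp_min_le (f : α → E) {s : Set α} {a : α} (ha : a ∈ s) :
    eVariationOn (fun r => f (min r a)) s ≤ eVariationOn f s := by
  rw [show (fun r => f (min r a)) = f ∘ (min · a) from rfl,
    comp_eq_of_monotoneOn f _ fun u _ v _ huv => min_le_min_right a huv]
  refine mono f ?_
  rintro _ ⟨r, hr, rfl⟩
  show min r a ∈ s
  rcases min_choice r a with h | h <;> rw [h] <;> assumption

theorem comp_clamp_le (f : α → E) (s : Set α) {a b : α} (hab : a ≤ b) :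
    eVariationOn (fun r => f (min (max r a) b)) s ≤ eVariationOn f (Icc a b) := by
  rw [show (fun r => f (min (max r a) b)) = f ∘ (fun r => min (max r a) b) from rfl,
    comp_eq_of_monotoneOn f _ fun u _ v _ huv => min_le_min_right b (max_le_max_right a huv)]
  refine mono f ?_
  rintro _ ⟨r, -, rfl⟩
  exact ⟨le_min (le_max_right r a) hab, min_le_right _ _⟩

/-- `f (min r a) - f (min r b)` is, up to sign and an additive constant, `f` evaluated at `r`
clamped to `uIcc a b`. -/
theorem comp_min_sub_comp_min_le (f : α → E) (s : Set α) (a b : α) :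
    eVariationOn (fun r => f (min r a) - f (min r b)) s ≤ eVariationOn f (uIcc a b) := by
  rcases le_total a b with hab | hba
  · calc eVariationOn (fun r => f (min r a) - f (min r b)) s
        = eVariationOn (fun r => f a - f (min (max r a) b)) s := by
          congr 1; funext r
          rcases le_total r a with h | h
          · simp [h, h.trans hab, hab]
          · simp [h]
      _ ≤ eVariationOn (fun z => f a - f z) (Icc a b) := comp_clamp_le _ s hab
      _ = eVariationOn f (uIcc a b) := by rw [const_sub, uIcc_of_le hab]
  · calc eVariationOn (fun r => f (min r a) - f (min r b)) s
        = eVariationOn (fun r => f (min (max r b) a) - f b) s := by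
          congr 1; funext r
          rcases le_total r b with h | h
          · simp [h, h.trans hba, hba]
          · simp [h]
      _ ≤ eVariationOn (fun z => f z - f b) (Icc b a) := comp_clamp_le _ s hba
      _ = eVariationOn f (uIcc a b) := by rw [sub_const, uIcc_of_ge hba]

theorem comp_min_sub_comp_min_le_add {f g : α → E} {s : Set α} {a b : α} (ha : a ∈ s) :
    eVariationOn (fun r => f (min r a) - g (min r b)) s ≤
      eVariationOn (f - g) s + eVariationOn g (uIcc a b) := by
  have hsplit : (fun r => f (min r a) - g (min r b)) =
      (fun r => (f - g) (min r a)) - fun r => g (min r b) - g (min r a) := by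
    funext r; simp only [Pi.sub_apply]; abel
  rw [hsplit, uIcc_comm]
  exact (sub_le _ _ s).trans (add_le_add (comp_min_le _ ha) (comp_min_sub_comp_min_le g s b a))

end eVariationOn

theorem BoundedVariationOn.tendsto_eVariationOn_uIcc_zero {α : Type*} [LinearOrder α]
    [TopologicalSpace α] [OrderTopology α] {E : Type*} [SeminormedAddCommGroup E]
    {f : α → E} {s : Set α} (hs : s.OrdConnected) (hf : BoundedVariationOn f s) {x : α}
    (hx : x ∈ s) (hc : ContinuousWithinAt f s x) :
    Tendsto (fun y => eVariationOn f (uIcc y x)) (𝓝[s] x) (𝓝 0) := by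
  have hleft := hf.tendsto_eVariationOn_Icc_zero_left (hc.mono inter_subset_left)
  have hright := hf.tendsto_eVariationOn_Icc_zero_right x (hc.mono inter_subset_left)
  refine tendsto_of_tendsto_of_tendsto_of_le_of_le' tendsto_const_nhds
    (by simpa using hleft.add hright) (Eventually.of_forall fun _ => zero_le) ?_
  filter_upwards [self_mem_nhdsWithin] with y hy
  rcases le_total y x with h | h
  · rw [uIcc_of_le h]
    exact (eVariationOn.mono f (subset_inter (hs.out hy hx) subset_rfl)).trans le_self_add
  · rw [uIcc_of_ge h]
    exact (eVariationOn.mono f (subset_inter (hs.out hx hy) subset_rfl)).trans le_add_self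

theorem stmt_9_general (T : ℝ) (d : ℕ)
    (K : Set (ℝ → EuclideanSpace ℝ (Fin d)))
    (hK : ∀ x ∈ K, ContinuousOn x (Set.Icc 0 T) ∧ BoundedVariationOn x (Set.Icc 0 T))
    (hKcpt : ∀ x : ℕ → ℝ → EuclideanSpace ℝ (Fin d), (∀ n, x n ∈ K) →
      ∃ φ : ℕ → ℕ, StrictMono φ ∧ ∃ y ∈ K,
        Tendsto (fun k => ‖x (φ k) 0 - y 0‖ +
          (eVariationOn (fun r => x (φ k) r - y r) (Set.Icc 0 T)).toReal)
          atTop (nhds 0))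
    (t : ℕ → ℝ) (ht : ∀ n, t n ∈ Set.Icc 0 T)
    (x : ℕ → ℝ → EuclideanSpace ℝ (Fin d)) (hx : ∀ n, x n ∈ K) :
    ∃ φ : ℕ → ℕ, StrictMono φ ∧ ∃ tl ∈ Set.Icc 0 T, ∃ y ∈ K,
      Tendsto (fun k => rho1var T (t (φ k)) (x (φ k)) tl y) atTop (nhds 0) := by
  obtain ⟨φ, hφ, y, hyK, hxy⟩ := hKcpt x hx
  obtain ⟨tl, htl, ψ, hψ, htψ⟩ := isCompact_Icc.tendsto_subseq fun n => ht (φ n)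
  refine ⟨φ ∘ ψ, hφ.comp hψ, tl, htl, y, hyK, ?_⟩
  obtain ⟨hyc, hybv⟩ := hK y hyK
  have hvar : Tendsto (fun k => eVariationOn (x (φ (ψ k)) - y) (Icc 0 T)) atTop (𝓝 0) := by
    refine (ENNReal.tendsto_toReal_zero_iff fun _ => ne_top_of_le_ne_top
      (ENNReal.add_ne_top.mpr ⟨(hK _ (hx _)).2, hybv⟩) (eVariationOn.sub_le _ _ _)).mp ?_
    exact squeeze_zero (fun _ => ENNReal.toReal_nonneg) (fun _ => le_add_of_nonneg_left (norm_nonneg _))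
      (hxy.comp hψ.tendsto_atTop)
  have hnear : Tendsto (fun k => eVariationOn y (uIcc (t (φ (ψ k))) tl)) atTop (𝓝 0) :=
    (hybv.tendsto_eVariationOn_uIcc_zero ordConnected_Icc htl (hyc tl htl)).comp
      (tendsto_nhdsWithin_iff.mpr ⟨htψ, Eventually.of_forall fun _ => ht _⟩)
  have hstopped : Tendsto (fun k => eVariationOn (fun r => x (φ (ψ k)) (min r (t (φ (ψ k)))) -
      y (min r tl)) (Icc 0 T)) atTop (𝓝 0) :=
    tendsto_of_tendsto_of_tendsto_of_le_of_le tendsto_const_nhds (by simpa using hvar.add hnear)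
      (fun _ => zero_le) fun k => eVariationOn.comp_min_sub_comp_min_le_add (ht _)
  simpa [rho1var, ← Real.dist_eq] using
    (tendsto_iff_dist_tendsto_zero.mp htψ).add ((ENNReal.tendsto_toReal ENNReal.zero_ne_top).comp hstopped)

/-- if `K ⊆ C^{1-var}([0,T],ℝ^d)` is (sequentially) compact for the
norm `‖b‖ = |b(0)| + |b|_{1-var;[0,T]}`, then `[0,T] × K` is (sequentially)
compact for the metric `ρ_{1-var}`. -/
theorem stmt_9 (T : ℝ) (hT : 0 < T) (d : ℕ) (hd : 1 ≤ d)
    (K : Set (ℝ → EuclideanSpace ℝ (Fin d)))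
    (hK : ∀ x ∈ K, ContinuousOn x (Set.Icc 0 T) ∧ BoundedVariationOn x (Set.Icc 0 T))
    (hKcpt : ∀ x : ℕ → ℝ → EuclideanSpace ℝ (Fin d), (∀ n, x n ∈ K) →
      ∃ φ : ℕ → ℕ, StrictMono φ ∧ ∃ y ∈ K,
        Tendsto (fun k => ‖x (φ k) 0 - y 0‖ +
          (eVariationOn (fun r => x (φ k) r - y r) (Set.Icc 0 T)).toReal)
          atTop (nhds 0))
    (t : ℕ → ℝ) (ht : ∀ n, t n ∈ Set.Icc 0 T)
    (x : ℕ → ℝ → EuclideanSpace ℝ (Fin d)) (hx : ∀ n, x n ∈ K) :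
    ∃ φ : ℕ → ℕ, StrictMono φ ∧ ∃ tl ∈ Set.Icc 0 T, ∃ y ∈ K,
      Tendsto (fun k => rho1var T (t (φ k)) (x (φ k)) tl y) atTop (nhds 0) :=
  stmt_9_general T d K hK hKcpt t ht x hx
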